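/- Let β > 0 and y > 0. Then ∫_0^∞ T_t(x,y) t^{-1/2} dt ≤ C (x/y)^β for all 0 < x ≤ y/2, where T_t(x,y) = (xy)^{1/2}/(2t) I_{β-1/2}(xy/(2t)) exp(-(x²+y²)/(4t)) is the Bessel heat kernel and C depends only on β. -/

import Mathlib

open Real Set MeasureTheory

/-- Modified Bessel function of the first kind (series definition). -/
noncomputable def besselI (ν x : ℝ) : ℝ :=
  ∑' n : ℕ, (x/2) ^ ν * (x/2) ^ (2*n) / (Nat.factorial n * Real.Gamma (n + ν + 1))

/-- The Bessel heat kernel. -/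
noncomputable def TB (β t x y : ℝ) : ℝ :=
  (x*y) ^ ((1:ℝ)/2) / (2*t) * besselI (β - 1/2) (x*y/(2*t)) * Real.exp (-(x^2+y^2)/(4*t))

/-! The series of `I_ν` is dominated termwise by that of `(u/2)^ν cosh u / Γ(ν+1)`, because
`Γ(ν+1) (2n)! ≤ 4ⁿ n! Γ(n+ν+1)` for `ν ≥ -1/2`; hence `I_ν(u) ≤ (u/2)^ν eᵘ / Γ(ν+1)`.
In the kernel, `e^{xy/2t}` combines with the Gaussian factor into `e^{-(y-x)²/4t}`, which is at most
`e^{-y²/16t}` when `x ≤ y/2`. What remains is `(xy/4)^β t^{-β-1} e^{-y²/16t} / Γ(β+1/2)`, and the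
substitution `t ↦ 1/t` turns its time integral into Euler's integral, with value
`(4x/y)^β Γ(β) / Γ(β+1/2)`. -/

open scoped Nat

theorem Gamma_add_one_mul_factorial_two_mul_le {ν : ℝ} (hν : -(1/2) ≤ ν) (n : ℕ) :
    Gamma (ν + 1) * (2 * n)! ≤ 4 ^ n * n ! * Gamma (n + ν + 1) := by
  induction n with
  | zero => simp
  | succ n ih =>
    have hpos : 0 < (n : ℝ) + ν + 1 := by linarith [(n.cast_nonneg : (0 : ℝ) ≤ n)]
    have hΓ : Gamma ((n + 1 : ℕ) + ν + 1) = ((n : ℝ) + ν + 1) * Gamma (n + ν + 1) := by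
      rw [← Gamma_add_one hpos.ne']; push_cast; ring_nf
    have hfac : ((2 * (n + 1))! : ℝ) = (2 * n + 2) * (2 * n + 1) * (2 * n)! := by
      rw [show 2 * (n + 1) = 2 * n + 1 + 1 by ring, Nat.factorial_succ, Nat.factorial_succ]
      push_cast; ring
    -- the step `(2n+2)(2n+1) ≤ 4(n+1)(n+ν+1)` is exactly `-1/2 ≤ ν`
    have hstep : (2 * (n : ℝ) + 2) * (2 * n + 1) ≤ 4 * (n + 1) * (n + ν + 1) := by nlinarith
    rw [hΓ, hfac, Nat.factorial_succ]
    push_cast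
    calc Gamma (ν + 1) * ((2 * n + 2) * (2 * n + 1) * (2 * n)!)
        = Gamma (ν + 1) * (2 * n)! * ((2 * n + 2) * (2 * n + 1)) := by ring
      _ ≤ 4 ^ n * n ! * Gamma (n + ν + 1) * (4 * (n + 1) * (n + ν + 1)) := by
        gcongr
      _ = 4 ^ (n + 1) * ((n + 1) * n !) * ((n + ν + 1) * Gamma (n + ν + 1)) := by ring

lemma besselI_term_nonneg {ν u : ℝ} (hν : -1 < ν) (hu : 0 ≤ u) (n : ℕ) :
    0 ≤ (u / 2) ^ ν * (u / 2) ^ (2 * n) / (n ! * Gamma (n + ν + 1)) := by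
  have := Gamma_pos_of_pos (by linarith [(n.cast_nonneg : (0 : ℝ) ≤ n)] : 0 < (n : ℝ) + ν + 1)
  positivity

lemma besselI_nonneg {ν u : ℝ} (hν : -1 < ν) (hu : 0 ≤ u) : 0 ≤ besselI ν u :=
  tsum_nonneg (besselI_term_nonneg hν hu)

lemma besselI_term_le {ν u : ℝ} (hν : -(1/2) ≤ ν) (hu : 0 ≤ u) (n : ℕ) :
    (u / 2) ^ ν * (u / 2) ^ (2 * n) / (n ! * Gamma (n + ν + 1)) ≤
      (u / 2) ^ ν / Gamma (ν + 1) * (u ^ (2 * n) / (2 * n)!) := by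
  have hΓ : 0 < Gamma (ν + 1) := Gamma_pos_of_pos (by linarith)
  have h4 : (u / 2) ^ (2 * n) = u ^ (2 * n) / 4 ^ n := by rw [div_pow, pow_mul 2]; norm_num
  calc (u / 2) ^ ν * (u / 2) ^ (2 * n) / (n ! * Gamma (n + ν + 1))
      = (u / 2) ^ ν * u ^ (2 * n) / (4 ^ n * n ! * Gamma (n + ν + 1)) := by rw [h4]; ring
    _ ≤ (u / 2) ^ ν * u ^ (2 * n) / (Gamma (ν + 1) * (2 * n)!) :=
      div_le_div_of_nonneg_left (by positivity) (by positivity)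
        (Gamma_add_one_mul_factorial_two_mul_le hν n)
    _ = (u / 2) ^ ν / Gamma (ν + 1) * (u ^ (2 * n) / (2 * n)!) := by ring

lemma besselI_le_mul_cosh {ν u : ℝ} (hν : -(1/2) ≤ ν) (hu : 0 ≤ u) :
    besselI ν u ≤ (u / 2) ^ ν / Gamma (ν + 1) * cosh u := by
  have hcosh := (hasSum_cosh u).mul_left ((u / 2) ^ ν / Gamma (ν + 1))
  have hsum := Summable.of_nonneg_of_le (besselI_term_nonneg (by linarith) hu)
    (besselI_term_le hν hu) hcosh.summable
  exact hasSum_le (besselI_term_le hν hu) hsum.hasSum hcosh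

lemma cosh_le_exp {u : ℝ} (hu : 0 ≤ u) : cosh u ≤ exp u := by
  rw [cosh_eq]
  linarith [exp_le_exp.mpr (by linarith : -u ≤ u)]

lemma TB_nonneg {β t x y : ℝ} (hβ : -(1/2) < β) (ht : 0 ≤ t) (hx : 0 ≤ x) (hy : 0 ≤ y) :
    0 ≤ TB β t x y := by
  have := besselI_nonneg (ν := β - 1/2) (by linarith) (by positivity : 0 ≤ x * y / (2 * t))
  unfold TB
  positivity

lemma mul_div_add_neg_sq_add_sq_div_le {t x y : ℝ} (ht : 0 < t) (hx : 0 ≤ x) (hxy : x ≤ y / 2) :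
    x * y / (2 * t) + -(x ^ 2 + y ^ 2) / (4 * t) ≤ -(y ^ 2 / 16) / t := by
  rw [show x * y / (2 * t) + -(x ^ 2 + y ^ 2) / (4 * t) = -((y - x) ^ 2 / 4) / t by
    field_simp; ring]
  have hsq : y ^ 2 / 16 ≤ (y - x) ^ 2 / 4 := by nlinarith
  exact div_le_div_of_nonneg_right (by linarith) ht.le

lemma rpow_half_div_mul_rpow_sub_half_mul_rpow {a t β : ℝ} (ha : 0 < a) (ht : 0 < t) :
    (4 * a) ^ ((1:ℝ)/2) / (2 * t) * (a / t) ^ (β - 1/2) * t ^ (-(1:ℝ)/2) =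
      a ^ β * t ^ (-β - 1) := by
  have h4 : (4 : ℝ) ^ ((1:ℝ)/2) = 2 := by
    rw [show (4 : ℝ) = 2 ^ (2 : ℝ) by norm_num, ← rpow_mul (by norm_num)]; norm_num
  rw [mul_rpow (by norm_num) ha.le, h4, div_rpow ha.le ht.le, rpow_sub ha, rpow_sub ht,
    show -β - 1 = -(β + 1) by ring, rpow_neg ht.le, rpow_add_one ht.ne', neg_div, rpow_neg ht.le]
  field_simp

lemma TB_mul_rpow_le {β t x y : ℝ} (hβ : 0 ≤ β) (ht : 0 < t) (hx : 0 < x) (hxy : x ≤ y / 2) :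
    TB β t x y * t ^ (-(1:ℝ)/2) ≤
      (x * y / 4) ^ β / Gamma (β + 1/2) * (t ^ (-β - 1) * exp (-(y ^ 2 / 16) / t)) := by
  have hy : 0 < y := by linarith
  have hu : 0 ≤ x * y / (2 * t) := by positivity
  have hI : besselI (β - 1/2) (x * y / (2 * t)) ≤
      (x * y / (2 * t) / 2) ^ (β - 1/2) / Gamma (β + 1/2) * exp (x * y / (2 * t)) := by
    refine (besselI_le_mul_cosh (by linarith) hu).trans ?_
    rw [show β - 1/2 + 1 = β + 1/2 by ring]
    gcongr
    exact cosh_le_exp hu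
  have hexp := exp_le_exp.mpr (mul_div_add_neg_sq_add_sq_div_le ht hx.le hxy)
  rw [exp_add] at hexp
  have ha : 0 < x * y / 4 := by positivity
  calc TB β t x y * t ^ (-(1:ℝ)/2)
      ≤ (x * y) ^ ((1:ℝ)/2) / (2 * t) *
          ((x * y / (2 * t) / 2) ^ (β - 1/2) / Gamma (β + 1/2) * exp (x * y / (2 * t))) *
          exp (-(x ^ 2 + y ^ 2) / (4 * t)) * t ^ (-(1:ℝ)/2) := by
        unfold TB; gcongr
    _ = (4 * (x * y / 4)) ^ ((1:ℝ)/2) / (2 * t) * (x * y / 4 / t) ^ (β - 1/2) *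
          t ^ (-(1:ℝ)/2) / Gamma (β + 1/2) *
          (exp (x * y / (2 * t)) * exp (-(x ^ 2 + y ^ 2) / (4 * t))) := by
        rw [show 4 * (x * y / 4) = x * y by ring, show x * y / 4 / t = x * y / (2 * t) / 2 by ring]
        ring
    _ ≤ (4 * (x * y / 4)) ^ ((1:ℝ)/2) / (2 * t) * (x * y / 4 / t) ^ (β - 1/2) *
          t ^ (-(1:ℝ)/2) / Gamma (β + 1/2) * exp (-(y ^ 2 / 16) / t) := by
        gcongr
    _ = _ := by rw [rpow_half_div_mul_rpow_sub_half_mul_rpow ha ht]; ring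

lemma rpow_neg_sub_one_mul_exp_neg_div_eq {b c t : ℝ} (ht : 0 < t) :
    t ^ (-b - 1) * exp (-c / t) =
      (|(-1 : ℝ)| * t ^ ((-1 : ℝ) - 1)) •
        ((t ^ (-1 : ℝ)) ^ (b - 1) * exp (-(c * t ^ (-1 : ℝ)))) := by
  rw [smul_eq_mul, abs_neg, abs_one, one_mul, rpow_neg_one, inv_rpow ht.le, ← rpow_neg ht.le,
    ← mul_assoc, ← rpow_add ht, ← div_eq_mul_inv, neg_div]
  ring_nf

lemma integrableOn_rpow_neg_sub_one_mul_exp_neg_div {b c : ℝ} (hb : 0 < b) (hc : 0 < c) :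
    IntegrableOn (fun t : ℝ => t ^ (-b - 1) * exp (-c / t)) (Ioi 0) := by
  have h : IntegrableOn (fun s : ℝ => s ^ (b - 1) * exp (-(c * s))) (Ioi 0) := by
    simpa only [rpow_one, neg_mul] using
      integrableOn_rpow_mul_exp_neg_mul_rpow (p := 1) (by linarith) one_pos hc
  exact ((integrableOn_Ioi_comp_rpow_iff _ (by norm_num : (-1 : ℝ) ≠ 0)).mpr h).congr_fun
    (fun t ht => (rpow_neg_sub_one_mul_exp_neg_div_eq ht).symm) measurableSet_Ioi

lemma integral_rpow_neg_sub_one_mul_exp_neg_div {b c : ℝ} (hb : 0 < b) (hc : 0 < c) :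
    ∫ t in Ioi 0, t ^ (-b - 1) * exp (-c / t) = (1 / c) ^ b * Gamma b := by
  rw [← integral_rpow_mul_exp_neg_mul_Ioi hb hc,
    ← integral_comp_rpow_Ioi (fun s : ℝ => s ^ (b - 1) * exp (-(c * s)))
      (by norm_num : (-1 : ℝ) ≠ 0)]
  exact setIntegral_congr_fun measurableSet_Ioi fun t ht => rpow_neg_sub_one_mul_exp_neg_div_eq ht

theorem bessel_time_integral_small_x (β : ℝ) (hβ : 0 < β) :
    ∃ C : ℝ, ∀ y : ℝ, 0 < y → ∀ x : ℝ, 0 < x → x ≤ y/2 →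
      ∫ t in Ioi (0:ℝ), TB β t x y * t ^ (-(1:ℝ)/2) ≤ C * (x/y) ^ β := by
  refine ⟨4 ^ β * Gamma β / Gamma (β + 1/2), fun y hy x hx hxy => ?_⟩
  have hc : 0 < y ^ 2 / 16 := by positivity
  calc ∫ t in Ioi 0, TB β t x y * t ^ (-(1:ℝ)/2)
      ≤ ∫ t in Ioi 0, (x * y / 4) ^ β / Gamma (β + 1/2) *
          (t ^ (-β - 1) * exp (-(y ^ 2 / 16) / t)) :=
        setIntegral_mono_of_nonneg
          (fun t ht => mul_nonneg (TB_nonneg (by linarith) (le_of_lt ht) hx.le hy.le)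
            (rpow_nonneg (le_of_lt ht) _))
          (fun t ht => TB_mul_rpow_le hβ.le ht hx hxy)
          ((integrableOn_rpow_neg_sub_one_mul_exp_neg_div hβ hc).const_mul _)
    _ = (x * y / 4 * (16 / y ^ 2)) ^ β * Gamma β / Gamma (β + 1/2) := by
        rw [integral_const_mul, integral_rpow_neg_sub_one_mul_exp_neg_div hβ hc, one_div_div,
          mul_rpow (by positivity) (by positivity)]
        ring
    _ = 4 ^ β * Gamma β / Gamma (β + 1/2) * (x / y) ^ β := by
        rw [show x * y / 4 * (16 / y ^ 2) = 4 * (x / y) by field_simp; ring,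
          mul_rpow (by norm_num) (by positivity)]
        ring
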